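/- arXiv:2204.10794 — 8 statements merged into one kernel-verified Lean document; each statement's English description precedes it below -/
import Mathlib

section
/- In an orthomodular poset of finite height, with x ⊙ y := Min U(x, y') ∧ y (elementwise) and the set operation A ⊙ y := union over x ∈ A of x ⊙ y, one has (Min U(a, b)) ⊙ a = {a} for all a, b. -/
/-- Common upper bounds of two elements. -/
def UB {P : Type*} [PartialOrder P] (a b : P) : Set P := {u | a ≤ u ∧ b ≤ u}

/-- Common lower bounds of two elements. -/
def LB {P : Type*} [PartialOrder P] (a b : P) : Set P := {l | l ≤ a ∧ l ≤ b}

/-- Minimal elements of the set of common upper bounds. -/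
def MinU {P : Type*} [PartialOrder P] (a b : P) : Set P :=
  {m | m ∈ UB a b ∧ ∀ x ∈ UB a b, x ≤ m → x = m}

/-- Maximal elements of the set of common lower bounds. -/
def MaxL {P : Type*} [PartialOrder P] (a b : P) : Set P :=
  {m | m ∈ LB a b ∧ ∀ x ∈ LB a b, m ≤ x → x = m}

/-- A poset has finite height if it contains no infinite chain. -/
def FinHeight (P : Type*) [Preorder P] : Prop :=
  ∀ C : Set P, IsChain (· ≤ ·) C → C.Finite

/-- x ⊙ y := Min U(x, y') ∧ y, elementwise (w is a witness of an existing meet). -/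
def odot {P : Type*} [PartialOrder P] (c : P → P) (x y : P) : Set P :=
  {w | ∃ m ∈ MinU x (c y), IsGLB {m, y} w}

/-- x → y := x' ∨ Max L(x, y), elementwise (w is a witness of an existing join). -/
def opImp {P : Type*} [PartialOrder P] (c : P → P) (x y : P) : Set P :=
  {w | ∃ m ∈ MaxL x y, IsLUB {c x, m} w}

/-- The order-like relation ⊑ on subsets. -/
def SubLE {P : Type*} [PartialOrder P] (A B : Set P) : Prop :=
  ∃ a ∈ A, ∃ b ∈ B, a ≤ b

/-- A ⊙ y := ⋃ x ∈ A, x ⊙ y. -/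
def setOdot {P : Type*} [PartialOrder P] (c : P → P) (A : Set P) (y : P) : Set P :=
  ⋃ x ∈ A, odot c x y


lemma exists_min_of_finHeight {P : Type*} [PartialOrder P] (hfin : FinHeight P)
    (S : Set P) (hS : S.Nonempty) : ∃ m ∈ S, ∀ x ∈ S, x ≤ m → x = m := by
  have wf : WellFounded ((· < ·) : P → P → Prop) := by
    rw [RelEmbedding.wellFounded_iff_isEmpty]
    constructor
    intro f
    have hchain : IsChain (· ≤ ·) (Set.range f) := by
      rintro _ ⟨i, rfl⟩ _ ⟨j, rfl⟩ _
      rcases lt_trichotomy i j with h | h | h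
      · exact Or.inr (le_of_lt (f.map_rel_iff.2 h))
      · exact Or.inl (le_of_eq (by rw [h]))
      · exact Or.inl (le_of_lt (f.map_rel_iff.2 h))
    exact (Set.infinite_range_of_injective f.injective) (hfin _ hchain)
  obtain ⟨m, hm, hmin⟩ := wf.has_min S hS
  refine ⟨m, hm, fun x hx hle => ?_⟩
  by_contra h
  exact hmin x hx (lt_of_le_of_ne hle h)

theorem stmt5 {P : Type*} [PartialOrder P] [BoundedOrder P] (c : P → P)
    (hanti : ∀ x y : P, x ≤ y → c y ≤ c x)
    (hinv : ∀ x : P, c (c x) = x)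
    (hinf : ∀ x : P, IsGLB {x, c x} ⊥)
    (hsup : ∀ x : P, IsLUB {x, c x} ⊤)
    (hjoin : ∀ x y : P, x ≤ c y → ∃ j, IsLUB {x, y} j)
    (hOM : ∀ x y j : P, x ≤ y → IsLUB {c y, x} j → IsLUB {x, c j} y)
    (hfin : FinHeight P) :
    ∀ a b : P, setOdot c (MinU a b) a = {a} := fun a b => by
  have htop_minU : ∀ m : P, a ≤ m → MinU m (c a) = {⊤} := by
    intro m ham
    have key : ∀ x : P, x ∈ UB m (c a) → x = ⊤ := by
      intro x ⟨hmx, hcx⟩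
      have : ⊤ ≤ x := (hsup a).2 (by
        rintro y (rfl | rfl)
        · exact le_trans ham hmx
        · exact hcx)
      exact le_antisymm le_top this
    ext x
    simp only [MinU, Set.mem_setOf_eq, Set.mem_singleton_iff]
    constructor
    · rintro ⟨hx, -⟩; exact key x hx
    · rintro rfl
      exact ⟨⟨le_top, le_top⟩, fun y hy _ => key y hy⟩
  have hglb_top : IsGLB ({⊤, a} : Set P) a := by
    constructor
    · rintro y (h | h)
      · exact h ▸ le_top
      · exact ge_of_eq h
    · intro l hl
      exact hl (show a ∈ ({⊤, a} : Set P) by simp)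
  ext w
  simp only [setOdot, odot, Set.mem_iUnion, Set.mem_setOf_eq, Set.mem_singleton_iff]
  constructor
  · rintro ⟨m, hm, n, hn, hglb⟩
    have ham : a ≤ m := hm.1.1
    rw [htop_minU m ham] at hn
    rcases hn with rfl
    exact (IsGLB.unique hglb hglb_top)
  · intro hw
    rw [hw]
    obtain ⟨m, hm⟩ := exists_min_of_finHeight hfin (UB a b) ⟨⊤, le_top, le_top⟩
    refine ⟨m, hm, ⊤, ?_, hglb_top⟩
    rw [htop_minU m hm.1.1]
    rfl
end

section
/- In an orthomodular poset of finite height, with x → y := x' ∨ Max L(x, y) and the relation A ⊑ B on nonempty subsets defined by: there exist a ∈ A, b ∈ B with a ≤ b, one has: a ≤ b implies (c → a) ⊑ (c → b) for all c. -/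
/-! By finite height, every common lower bound of `z` and `a` lies below a maximal one `m`;
as `a ≤ b`, `m` is also a lower bound of `z` and `b`, hence below some `m' ∈ Max L(z, b)`.
Both are orthogonal to `z'`, so the joins `z' ∨ m ≤ z' ∨ m'` exist and witness `⊑`. -/

section

variable {P : Type*} [PartialOrder P]

lemma IsChain.le_of_maximal {s : Set P} (hs : IsChain (· ≤ ·) s) {m : P}
    (hm : Maximal (· ∈ s) m) {x : P} (hx : x ∈ s) : x ≤ m := by
  rcases eq_or_ne x m with rfl | hne
  · exact le_rfl
  · exact (hs hx hm.prop hne).elim id fun hmx => hm.le_of_ge hx hmx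

lemma FinHeight.exists_le_maximal (hfin : FinHeight P) {S : Set P} {x : P} (hx : x ∈ S) :
    ∃ m, x ≤ m ∧ Maximal (· ∈ S) m := by
  refine zorn_le_nonempty₀ S (fun C hCS hC y hy => ?_) x hx
  obtain ⟨t, ht⟩ := (hfin C hC).exists_maximal ⟨y, hy⟩
  exact ⟨t, hCS ht.prop, fun _ hz => hC.le_of_maximal ht hz⟩

lemma FinHeight.exists_mem_MaxL_ge (hfin : FinHeight P) {a b x : P} (hx : x ∈ LB a b) :
    ∃ m ∈ MaxL a b, x ≤ m := by
  obtain ⟨m, hxm, hm⟩ := hfin.exists_le_maximal hx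
  exact ⟨m, ⟨hm.prop, fun y hy hmy => (hm.le_of_ge hy hmy).antisymm hmy⟩, hxm⟩

lemma LB_subset_LB_right {a b b' : P} (hb : b ≤ b') : LB a b ⊆ LB a b' :=
  fun _ hx => ⟨hx.1, hx.2.trans hb⟩

lemma IsLUB.pair_le_of_le {a b b' j j' : P} (hj : IsLUB {a, b} j) (hj' : IsLUB {a, b'} j')
    (hb : b ≤ b') : j ≤ j' := by
  refine hj.2 ?_
  simp only [upperBounds_insert, upperBounds_singleton, Set.mem_inter_iff, Set.mem_Ici]
  exact ⟨hj'.1 (Set.mem_insert a _), hb.trans (hj'.1 (Set.mem_insert_of_mem a rfl))⟩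

lemma exists_mem_opImp_of_mem_MaxL {c : P → P} (hanti : ∀ x y : P, x ≤ y → c y ≤ c x)
    (hjoin : ∀ x y : P, x ≤ c y → ∃ j, IsLUB {x, y} j) {z a m : P} (hm : m ∈ MaxL z a) :
    ∃ j ∈ opImp c z a, IsLUB {c z, m} j := by
  obtain ⟨j, hj⟩ := hjoin (c z) m (hanti m z hm.1.1)
  exact ⟨j, ⟨m, hm, hj⟩, hj⟩

end

theorem stmt8_general {P : Type*} [PartialOrder P] [BoundedOrder P] (c : P → P)
    (hanti : ∀ x y : P, x ≤ y → c y ≤ c x)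
    (hjoin : ∀ x y : P, x ≤ c y → ∃ j, IsLUB {x, y} j)
    (hfin : FinHeight P) :
    ∀ a b z : P, a ≤ b → SubLE (opImp c z a) (opImp c z b) := by
  intro a b z hab
  obtain ⟨m, hm, -⟩ := hfin.exists_mem_MaxL_ge (show (⊥ : P) ∈ LB z a from ⟨bot_le, bot_le⟩)
  obtain ⟨m', hm', hmm'⟩ := hfin.exists_mem_MaxL_ge (LB_subset_LB_right hab hm.1)
  obtain ⟨j, hj, hjm⟩ := exists_mem_opImp_of_mem_MaxL hanti hjoin hm
  obtain ⟨j', hj', hjm'⟩ := exists_mem_opImp_of_mem_MaxL hanti hjoin hm'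
  exact ⟨j, hj, j', hj', hjm.pair_le_of_le hjm' hmm'⟩

theorem stmt8 {P : Type*} [PartialOrder P] [BoundedOrder P] (c : P → P)
    (hanti : ∀ x y : P, x ≤ y → c y ≤ c x)
    (hinv : ∀ x : P, c (c x) = x)
    (hinf : ∀ x : P, IsGLB {x, c x} ⊥)
    (hsup : ∀ x : P, IsLUB {x, c x} ⊤)
    (hjoin : ∀ x y : P, x ≤ c y → ∃ j, IsLUB {x, y} j)
    (hOM : ∀ x y j : P, x ≤ y → IsLUB {c y, x} j → IsLUB {x, c j} y)
    (hfin : FinHeight P) :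
    ∀ a b z : P, a ≤ b → SubLE (opImp c z a) (opImp c z b) :=
  stmt8_general c hanti hjoin hfin
end

section
/- In an orthomodular poset of finite height, with x ⊙ y := Min U(x, y') ∧ y and x → y := x' ∨ Max L(x, y), operator left adjointness holds: for all a, b, c ∈ P, (a ⊙ b) ⊑ {c} if and only if {a} ⊑ (b → c), where A ⊑ B means some element of A is ≤ some element of B. -/
/-! Finite height makes the order well-founded in both directions, so witnesses can be pushed
to maximal or minimal ones. Orthomodularity enters in two dual forms: if `b' ≤ m` then
`m = b' ∨ (m ∧ b)`, and if `d ≤ b` then `(b' ∨ d) ∧ b = d`.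

(⇒) From `a ≤ m ∈ Min U(a, b')` and `m ∧ b ≤ z`, choose `d ∈ Max L(b, z)` above `m ∧ b`;
then `a ≤ m = b' ∨ (m ∧ b) ≤ b' ∨ d`.
(⇐) From `a ≤ b' ∨ d` with `d ∈ Max L(b, z)`, choose `m ∈ Min U(a, b')` below `b' ∨ d`;
then `m ∧ b ≤ (b' ∨ d) ∧ b = d ≤ z`. -/

theorem FinHeight.wellFoundedGT {P : Type*} [Preorder P] (h : FinHeight P) : WellFoundedGT P := by
  refine ⟨RelEmbedding.wellFounded_iff_isEmpty.2 ⟨fun f => ?_⟩⟩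
  have hf : StrictMono f := fun _ _ hmn => f.map_rel_iff.2 hmn
  exact Set.infinite_range_of_injective hf.injective (h _ hf.monotone.isChain_range)

theorem FinHeight.wellFoundedLT {P : Type*} [Preorder P] (h : FinHeight P) : WellFoundedLT P := by
  refine ⟨RelEmbedding.wellFounded_iff_isEmpty.2 ⟨fun f => ?_⟩⟩
  have hf : StrictAnti f := fun _ _ hmn => f.map_rel_iff.2 hmn
  exact Set.infinite_range_of_injective hf.injective (h _ hf.antitone.isChain_range)

section Orthocomplement

variable {P : Type*} [PartialOrder P] {c : P → P}

theorem isLUB_pair_iff {x y j : P} :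
    IsLUB {x, y} j ↔ x ≤ j ∧ y ≤ j ∧ ∀ u, x ≤ u → y ≤ u → j ≤ u := by
  simp [IsLUB, IsLeast, upperBounds, lowerBounds, and_assoc]

theorem isGLB_pair_iff {x y w : P} :
    IsGLB {x, y} w ↔ w ≤ x ∧ w ≤ y ∧ ∀ l, l ≤ x → l ≤ y → l ≤ w := by
  simp [IsGLB, IsGreatest, upperBounds, lowerBounds, and_assoc]

theorem Antitone.le_iff_of_involutive (hc : Antitone c) (hc' : Function.Involutive c) {x y : P} :
    c x ≤ c y ↔ y ≤ x :=
  ⟨fun h => hc' x ▸ hc' y ▸ hc h, fun h => hc h⟩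

theorem isGLB_pair_compl_iff (hc : Antitone c) (hc' : Function.Involutive c) {x y j : P} :
    IsGLB {c x, c y} (c j) ↔ IsLUB {x, y} j := by
  simp only [isGLB_pair_iff, isLUB_pair_iff, hc'.surjective.forall (p := fun l => l ≤ _ → _),
    hc.le_iff_of_involutive hc']

theorem isLUB_compl_of_isGLB (hc : Antitone c) (hc' : Function.Involutive c)
    (hOM : ∀ x y j : P, x ≤ y → IsLUB {c y, x} j → IsLUB {x, c j} y)
    {m b w : P} (hbm : c b ≤ m) (hw : IsGLB {m, b} w) : IsLUB {c b, w} m := by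
  have hcw : IsLUB {c m, c b} (c w) := by
    rwa [← isGLB_pair_compl_iff hc hc', hc', hc', hc']
  simpa only [hc' w] using hOM (c b) m (c w) hbm hcw

theorem isGLB_of_isLUB_compl (hc : Antitone c) (hc' : Function.Involutive c)
    (hOM : ∀ x y j : P, x ≤ y → IsLUB {c y, x} j → IsLUB {x, c j} y)
    {b d v : P} (hdb : d ≤ b) (hv : IsLUB {c b, d} v) : IsGLB {v, b} d := by
  have hdv : d ≤ v := hv.1 (Set.mem_insert_of_mem _ rfl)
  have hb : IsLUB {d, c v} b := hOM d b v hdb hv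
  have hcd : IsLUB {c v, c b} (c d) := hOM (c v) (c d) b (hc hdv) (by rwa [hc'])
  rwa [← isGLB_pair_compl_iff hc hc', hc', hc', hc'] at hcd

theorem exists_isGLB_of_compl_le (hc : Antitone c) (hc' : Function.Involutive c)
    (hjoin : ∀ x y : P, x ≤ c y → ∃ j, IsLUB {x, y} j)
    {m b : P} (hbm : c b ≤ m) : ∃ w, IsGLB {m, b} w := by
  obtain ⟨j, hj⟩ := hjoin (c m) (c b) (hc hbm)
  exact ⟨c j, by rwa [← isGLB_pair_compl_iff hc hc', hc', hc'] at hj⟩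

end Orthocomplement

section Adjointness

variable {P : Type*} [PartialOrder P] {c : P → P}

theorem subLE_opImp_of_subLE_odot [WellFoundedGT P] (hc : Antitone c) (hc' : Function.Involutive c)
    (hjoin : ∀ x y : P, x ≤ c y → ∃ j, IsLUB {x, y} j)
    (hOM : ∀ x y j : P, x ≤ y → IsLUB {c y, x} j → IsLUB {x, c j} y)
    {a b z : P} (h : SubLE (odot c a b) {z}) : SubLE {a} (opImp c b z) := by
  obtain ⟨w, ⟨m, ⟨⟨ham, hbm⟩, -⟩, hw⟩, z', hz', hwz⟩ := h
  subst z'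
  obtain ⟨-, hwb, -⟩ := isGLB_pair_iff.1 hw
  obtain ⟨d, hwd, hd⟩ := exists_maximal_ge_of_wellFoundedGT (· ∈ LB b z) w ⟨hwb, hwz⟩
  obtain ⟨v, hv⟩ := hjoin (c b) d (hc hd.1.1)
  obtain ⟨hbv, hdv, -⟩ := isLUB_pair_iff.1 hv
  have hmv : m ≤ v := (isLUB_pair_iff.1 (isLUB_compl_of_isGLB hc hc' hOM hbm hw)).2.2 v hbv
    (hwd.trans hdv)
  exact ⟨a, rfl, v, ⟨d, ⟨hd.1, fun y hy hle => hd.eq_of_ge hy hle⟩, hv⟩, ham.trans hmv⟩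

theorem subLE_odot_of_subLE_opImp [WellFoundedLT P] (hc : Antitone c) (hc' : Function.Involutive c)
    (hjoin : ∀ x y : P, x ≤ c y → ∃ j, IsLUB {x, y} j)
    (hOM : ∀ x y j : P, x ≤ y → IsLUB {c y, x} j → IsLUB {x, c j} y)
    {a b z : P} (h : SubLE {a} (opImp c b z)) : SubLE (odot c a b) {z} := by
  obtain ⟨a', ha', v, ⟨d, ⟨⟨hdb, hdz⟩, -⟩, hv⟩, hav⟩ := h
  subst a'
  obtain ⟨hbv, -, -⟩ := isLUB_pair_iff.1 hv
  obtain ⟨m, hmv, hm⟩ := exists_minimal_le_of_wellFoundedLT (· ∈ UB a (c b)) v ⟨hav, hbv⟩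
  obtain ⟨w, hw⟩ := exists_isGLB_of_compl_le hc hc' hjoin hm.1.2
  obtain ⟨hwm, hwb, -⟩ := isGLB_pair_iff.1 hw
  have hwd : w ≤ d := (isGLB_pair_iff.1 (isGLB_of_isLUB_compl hc hc' hOM hdb hv)).2.2 w
    (hwm.trans hmv) hwb
  exact ⟨w, ⟨m, ⟨hm.1, fun y hy hle => hm.eq_of_le hy hle⟩, hw⟩, z, rfl, hwd.trans hdz⟩

end Adjointness

theorem stmt10_general {P : Type*} [PartialOrder P] (c : P → P)
    (hanti : ∀ x y : P, x ≤ y → c y ≤ c x)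
    (hinv : ∀ x : P, c (c x) = x)
    (hjoin : ∀ x y : P, x ≤ c y → ∃ j, IsLUB {x, y} j)
    (hOM : ∀ x y j : P, x ≤ y → IsLUB {c y, x} j → IsLUB {x, c j} y)
    (hfin : FinHeight P) :
    ∀ a b z : P, SubLE (odot c a b) {z} ↔ SubLE {a} (opImp c b z) := by
  have := hfin.wellFoundedGT
  have := hfin.wellFoundedLT
  exact fun a b z => ⟨subLE_opImp_of_subLE_odot hanti hinv hjoin hOM,
    subLE_odot_of_subLE_opImp hanti hinv hjoin hOM⟩

theorem stmt10 {P : Type*} [PartialOrder P] [BoundedOrder P] (c : P → P)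
    (hanti : ∀ x y : P, x ≤ y → c y ≤ c x)
    (hinv : ∀ x : P, c (c x) = x)
    (hinf : ∀ x : P, IsGLB {x, c x} ⊥)
    (hsup : ∀ x : P, IsLUB {x, c x} ⊤)
    (hjoin : ∀ x y : P, x ≤ c y → ∃ j, IsLUB {x, y} j)
    (hOM : ∀ x y j : P, x ≤ y → IsLUB {c y, x} j → IsLUB {x, c j} y)
    (hfin : FinHeight P) :
    ∀ a b z : P, SubLE (odot c a b) {z} ↔ SubLE {a} (opImp c b z) :=
  stmt10_general c hanti hinv hjoin hOM hfin
end

section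
/- In an orthomodular poset of finite height, with x ⊙ y := Min U(x, y') ∧ y: if b' ≤ a then a ⊙ b = {a ∧ b} (in particular the meet a ∧ b exists). -/
theorem stmt12 {P : Type*} [PartialOrder P] [BoundedOrder P] (c : P → P)
    (hanti : ∀ x y : P, x ≤ y → c y ≤ c x)
    (hinv : ∀ x : P, c (c x) = x)
    (hinf : ∀ x : P, IsGLB {x, c x} ⊥)
    (hsup : ∀ x : P, IsLUB {x, c x} ⊤)
    (hjoin : ∀ x y : P, x ≤ c y → ∃ j, IsLUB {x, y} j)
    (hOM : ∀ x y j : P, x ≤ y → IsLUB {c y, x} j → IsLUB {x, c j} y)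
    (hfin : FinHeight P) :
    ∀ a b : P, c b ≤ a → ∃ m, IsGLB {a, b} m ∧ odot c a b = {m} := by
  intro a b hba
  -- join of c a and c b exists
  have hca : c a ≤ c (c b) := hanti _ _ hba
  obtain ⟨j, hj⟩ := hjoin (c a) (c b) hca
  have hja : c a ≤ j := hj.1 (by simp)
  have hjb : c b ≤ j := hj.1 (by simp)
  have hglb : IsGLB {a, b} (c j) := by
    constructor
    · intro x hx
      rcases hx with rfl | hx
      · have := hanti _ _ hja; rwa [hinv] at this
      · simp only [Set.mem_singleton_iff] at hx
        subst hx
        have := hanti _ _ hjb; rwa [hinv] at this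
    · intro l hl
      have hla : l ≤ a := hl (by simp)
      have hlb : l ≤ b := hl (by simp)
      have h1 : c a ≤ c l := hanti _ _ hla
      have h2 : c b ≤ c l := hanti _ _ hlb
      have hjl : j ≤ c l := hj.2 (by
        intro x hx
        rcases hx with rfl | hx
        · exact h1
        · simp only [Set.mem_singleton_iff] at hx; subst hx; exact h2)
      have := hanti _ _ hjl; rwa [hinv] at this
  -- MinU a (c b) = {a}
  have hMin : MinU a (c b) = {a} := by
    ext m
    constructor
    · rintro ⟨⟨ham, hbm⟩, hmin⟩
      exact (hmin a ⟨le_refl a, hba⟩ ham).symm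
    · rintro rfl
      exact ⟨⟨le_rfl, hba⟩, fun x hx hxa => le_antisymm hxa hx.1⟩
  refine ⟨c j, hglb, ?_⟩
  ext w
  simp only [odot, hMin, Set.mem_singleton_iff, Set.mem_setOf_eq]
  constructor
  · rintro ⟨m, rfl, hw⟩
    exact (hglb.unique hw).symm
  · rintro rfl
    exact ⟨a, rfl, hglb⟩
end

section
/- In an orthomodular poset of finite height, with x → y := x' ∨ Max L(x, y): if b ≤ a then a → b = {a' ∨ b} (in particular the join a' ∨ b exists). -/
theorem stmt13 {P : Type*} [PartialOrder P] [BoundedOrder P] (c : P → P)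
    (hanti : ∀ x y : P, x ≤ y → c y ≤ c x)
    (hinv : ∀ x : P, c (c x) = x)
    (hinf : ∀ x : P, IsGLB {x, c x} ⊥)
    (hsup : ∀ x : P, IsLUB {x, c x} ⊤)
    (hjoin : ∀ x y : P, x ≤ c y → ∃ j, IsLUB {x, y} j)
    (hOM : ∀ x y j : P, x ≤ y → IsLUB {c y, x} j → IsLUB {x, c j} y)
    (hfin : FinHeight P) :
    ∀ a b : P, b ≤ a → ∃ j, IsLUB {c a, b} j ∧ opImp c a b = {j} := by
  intro a b hba
  obtain ⟨j, hj⟩ := hjoin (c a) b (hanti b a hba)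
  refine ⟨j, hj, ?_⟩
  ext w
  simp only [opImp, Set.mem_setOf_eq, Set.mem_singleton_iff]
  constructor
  · rintro ⟨m, ⟨⟨hma, hmb⟩, hmax⟩, hw⟩
    have hbm : b = m := hmax b ⟨hba, le_rfl⟩ hmb
    subst hbm
    exact hw.unique hj
  · rintro rfl
    exact ⟨b, ⟨⟨hba, le_rfl⟩, fun x hx hbx => le_antisymm hx.2 hbx⟩, hj⟩
end

section
/- In an orthomodular poset of finite height, divisibility holds: for all x, y, the set (x → y) ⊙ x, defined as the union over z ∈ x → y of z ⊙ x, equals Max L(x, y). -/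
lemma lub_to_glb {P : Type*} [PartialOrder P] (c : P → P)
    (hanti : ∀ x y : P, x ≤ y → c y ≤ c x)
    (hinv : ∀ x : P, c (c x) = x) {a b j : P} (h : IsLUB {a, b} j) :
    IsGLB {c a, c b} (c j) := by
  constructor
  · intro s hs
    simp only [Set.mem_insert_iff, Set.mem_singleton_iff] at hs
    rcases hs with rfl | rfl
    · exact hanti _ _ (h.1 (Set.mem_insert _ _))
    · exact hanti _ _ (h.1 (Set.mem_insert_of_mem _ rfl))
  · intro w hw
    have ha : a ≤ c w := by
      have := hanti _ _ (hw (Set.mem_insert _ _))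
      rwa [hinv] at this
    have hb : b ≤ c w := by
      have := hanti _ _ (hw (Set.mem_insert_of_mem _ rfl))
      rwa [hinv] at this
    have hj : j ≤ c w := h.2 (by
      intro s hs
      simp only [Set.mem_insert_iff, Set.mem_singleton_iff] at hs
      rcases hs with rfl | rfl
      · exact ha
      · exact hb)
    have := hanti _ _ hj
    rwa [hinv] at this

lemma key_glb {P : Type*} [PartialOrder P] (c : P → P)
    (hanti : ∀ x y : P, x ≤ y → c y ≤ c x)
    (hinv : ∀ x : P, c (c x) = x)
    (hOM : ∀ x y j : P, x ≤ y → IsLUB {c y, x} j → IsLUB {x, c j} y)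
    {x m z : P} (hmx : m ≤ x) (hz : IsLUB {c x, m} z) : IsGLB {z, x} m := by
  have h1 : c x ≤ c m := hanti _ _ hmx
  have h2 : IsLUB {c (c m), c x} z := by rw [hinv, Set.pair_comm]; exact hz
  have h3 : IsLUB {c x, c z} (c m) := hOM (c x) (c m) z h1 h2
  have h4 := lub_to_glb c hanti hinv h3
  simp only [hinv] at h4
  rw [Set.pair_comm]
  exact h4

theorem stmt14 {P : Type*} [PartialOrder P] [BoundedOrder P] (c : P → P)
    (hanti : ∀ x y : P, x ≤ y → c y ≤ c x)
    (hinv : ∀ x : P, c (c x) = x)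
    (hinf : ∀ x : P, IsGLB {x, c x} ⊥)
    (hsup : ∀ x : P, IsLUB {x, c x} ⊤)
    (hjoin : ∀ x y : P, x ≤ c y → ∃ j, IsLUB {x, y} j)
    (hOM : ∀ x y j : P, x ≤ y → IsLUB {c y, x} j → IsLUB {x, c j} y)
    (hfin : FinHeight P) :
    ∀ x y : P, (⋃ z ∈ opImp c x y, odot c z x) = MaxL x y := by
  intro x y
  ext w
  simp only [Set.mem_iUnion]
  constructor
  · rintro ⟨z, ⟨m, hm, hlub⟩, m', hm', hglb⟩
    have hcxz : c x ≤ z := hlub.1 (Set.mem_insert _ _)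
    have hzm' : z = m' := hm'.2 z ⟨le_refl z, hcxz⟩ hm'.1.1
    subst hzm'
    have hkey : IsGLB {z, x} m := key_glb c hanti hinv hOM hm.1.1 hlub
    have : w = m := hglb.unique hkey
    rw [this]; exact hm
  · intro hw
    have hwx : w ≤ x := hw.1.1
    obtain ⟨z, hz⟩ := hjoin (c x) w (by
      have := hanti _ _ hwx
      exact this)
    refine ⟨z, ⟨w, hw, hz⟩, z, ⟨⟨le_refl z, hz.1 (Set.mem_insert _ _)⟩,
      fun u hu hul => le_antisymm hul hu.1⟩, ?_⟩
    exact key_glb c hanti hinv hOM hwx hz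
end

section
/- Let R = (R, ≤, ⊙, →, 0, 1) be a divisible operator residuated structure of finite height satisfying the double negation law and the contraposition law, and define x' := x → 0 (a singleton by the double negation law, identified with its element). Then (R, ≤, ', 0, 1) is an orthomodular poset: ' is an antitone involution, a complementation, x ≤ y' implies x ∨ y exists, and x ≤ y implies y = x ∨ (y ∧ x') (equivalently x = y ∧ (x ∨ y')). -/
theorem lub2 {P : Type*} [PartialOrder P] {a b j : P}
    (h1 : a ≤ j) (h2 : b ≤ j) (h3 : ∀ u, a ≤ u → b ≤ u → j ≤ u) : IsLUB {a, b} j := by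
  constructor
  · rintro u (rfl | rfl) <;> assumption
  · intro u hu
    exact h3 u (hu (by simp)) (hu (by simp))

theorem glb2 {P : Type*} [PartialOrder P] {a b m : P}
    (h1 : m ≤ a) (h2 : m ≤ b) (h3 : ∀ l, l ≤ a → l ≤ b → l ≤ m) : IsGLB {a, b} m := by
  constructor
  · rintro u (rfl | rfl) <;> assumption
  · intro l hl
    exact h3 l (hl (by simp)) (hl (by simp))

theorem lub2_left {P : Type*} [PartialOrder P] {a b j : P} (h : IsLUB {a, b} j) : a ≤ j :=
  h.1 (by simp)

theorem lub2_right {P : Type*} [PartialOrder P] {a b j : P} (h : IsLUB {a, b} j) : b ≤ j :=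
  h.1 (by simp)

theorem glb2_left {P : Type*} [PartialOrder P] {a b m : P} (h : IsGLB {a, b} m) : m ≤ a :=
  h.1 (by simp)

theorem glb2_right {P : Type*} [PartialOrder P] {a b m : P} (h : IsGLB {a, b} m) : m ≤ b :=
  h.1 (by simp)

theorem stmt16 {R : Type*} [PartialOrder R] [BoundedOrder R]
    (od im : R → R → Set R)
    (hfin : FinHeight R)
    (hne : ∀ x y : R, (od x y).Nonempty ∧ (im x y).Nonempty)
    (hadj : ∀ x y z : R, SubLE (od x y) {z} ↔ SubLE {x} (im y z))
    (hone : ∀ x : R, od x ⊤ = {x} ∧ od ⊤ x = {x})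
    (hv : ∀ x y : R, (∀ a ∈ im y ⊥, a ≤ x) → ∃ m, IsGLB {x, y} m ∧ od x y = {m})
    (hvi : ∀ x y : R, y ≤ x → im x y = {w | ∃ a ∈ im x ⊥, IsLUB {a, y} w})
    (hdiv : ∀ x y : R, (⋃ z ∈ im x y, od z x) = MaxL x y)
    (hdnl : ∀ x : R, (⋃ z ∈ im x ⊥, im z ⊥) = {x})
    (hcontra : ∀ x y : R, x ≤ y → ∀ a ∈ im y ⊥, ∀ b ∈ im x ⊥, a ≤ b) :
    ∃ n : R → R, (∀ x : R, im x ⊥ = {n x}) ∧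
      (∀ x y : R, x ≤ y → n y ≤ n x) ∧
      (∀ x : R, n (n x) = x) ∧
      (∀ x : R, IsGLB {x, n x} ⊥) ∧
      (∀ x : R, IsLUB {x, n x} ⊤) ∧
      (∀ x y : R, x ≤ n y → ∃ j, IsLUB {x, y} j) ∧
      (∀ x y : R, x ≤ y → ∃ m, IsGLB {y, n x} m ∧ IsLUB {x, m} y) ∧
      (∀ x y : R, x ≤ y → ∃ j, IsLUB {x, n y} j ∧ IsGLB {y, j} x) := by

  -- im x ⊥ is a singleton: contraposition with x ≤ x makes all its elements equal
  have hsingle : ∀ x : R, ∃ a, im x ⊥ = {a} := by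
    intro x
    obtain ⟨a, ha⟩ := (hne x ⊥).2
    refine ⟨a, Set.eq_singleton_iff_unique_mem.mpr ⟨ha, ?_⟩⟩
    intro b hb
    exact le_antisymm (hcontra x x le_rfl b hb a ha) (hcontra x x le_rfl a ha b hb)
  choose n hn using hsingle
  have hmemn : ∀ x : R, n x ∈ im x ⊥ := fun x => by rw [hn]; rfl
  -- antitone
  have hmono : ∀ x y : R, x ≤ y → n y ≤ n x := fun x y h =>
    hcontra x y h (n y) (hmemn y) (n x) (hmemn x)
  -- involution, from the double negation law
  have hinv : ∀ x : R, n (n x) = x := by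
    intro x
    have hmem : n (n x) ∈ ⋃ z ∈ im x ⊥, im z ⊥ :=
      Set.mem_biUnion (hmemn x) (hmemn (n x))
    rw [hdnl x] at hmem
    exact hmem
  have hnbot : n ⊥ = ⊤ := by
    have h1 : n (n ⊤) ≤ n ⊥ := hmono ⊥ (n ⊤) bot_le
    rw [hinv] at h1
    exact le_antisymm le_top h1
  -- complementation (meet part): uses adjunction
  have hglb : ∀ x : R, IsGLB {x, n x} ⊥ := by
    intro x
    obtain ⟨m, hm, hodm⟩ := hv (n x) x (fun a ha => by
      rw [hn] at ha; rw [ha])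
    have hsub : SubLE (od (n x) x) {(⊥ : R)} := by
      refine (hadj (n x) x ⊥).mpr ⟨n x, rfl, n x, hmemn x, le_rfl⟩
    obtain ⟨a, haod, b, hb, hab⟩ := hsub
    rw [hodm, Set.mem_singleton_iff] at haod
    rw [Set.mem_singleton_iff] at hb
    rw [haod, hb] at hab
    have hmb : m = ⊥ := le_antisymm hab bot_le
    rw [Set.pair_comm]
    exact hmb ▸ hm
  -- complementation (join part), by duality
  have hlub : ∀ x : R, IsLUB {x, n x} ⊤ := by
    intro x
    refine lub2 le_top le_top ?_
    intro u hxu hnxu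
    have h1 : n u ≤ n x := hmono x u hxu
    have h2 : n u ≤ x := by
      have := hmono (n x) u hnxu
      rwa [hinv] at this
    have h3 : n u ≤ ⊥ := (hglb x).2 (by rintro v (rfl | rfl) <;> assumption)
    have h4 : n u = ⊥ := le_antisymm h3 bot_le
    have h5 : u = ⊤ := by rw [← hinv u, h4, hnbot]
    exact h5.ge
  -- existence of joins of "orthogonal" pairs
  have hjoin : ∀ x y : R, x ≤ n y → ∃ j, IsLUB {x, y} j := by
    intro x y hxy
    have hyx : y ≤ n x := by
      have := hmono x (n y) hxy
      rwa [hinv] at this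
    obtain ⟨m, hm, -⟩ := hv (n x) (n y) (fun a ha => by
      rw [hn] at ha; rw [ha, hinv]; exact hyx)
    refine ⟨n m, lub2 ?_ ?_ ?_⟩
    · have := hmono m (n x) (glb2_left hm)
      rwa [hinv] at this
    · have := hmono m (n y) (glb2_right hm)
      rwa [hinv] at this
    · intro u hxu hyu
      have h1 : n u ≤ n x := hmono x u hxu
      have h2 : n u ≤ n y := hmono y u hyu
      have h3 : n u ≤ m := hm.2 (by rintro v (rfl | rfl) <;> assumption)
      have := hmono (n u) m h3
      rwa [hinv] at this
  -- the dual orthomodular law, from divisibility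
  have hdual : ∀ x y : R, x ≤ y → ∃ j, IsLUB {x, n y} j ∧ IsGLB {y, j} x := by
    intro x y hxy
    obtain ⟨z, hz⟩ := (hne y x).2
    rw [hvi y x hxy] at hz
    obtain ⟨a, ha, hza⟩ := hz
    rw [hn, Set.mem_singleton_iff] at ha
    subst ha
    -- z is the lub of {n y, x}
    have hzmem : z ∈ im y x := by
      rw [hvi y x hxy]
      exact ⟨n y, hmemn y, hza⟩
    -- MaxL y x = {x}
    have hmaxl : MaxL y x = {x} := by
      ext l
      simp only [MaxL, LB, Set.mem_setOf_eq, Set.mem_singleton_iff]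
      constructor
      · rintro ⟨⟨h1, h2⟩, h3⟩
        exact (h3 x ⟨hxy, le_rfl⟩ h2).symm
      · rintro rfl
        exact ⟨⟨hxy, le_rfl⟩, fun l hl hxl => le_antisymm hl.2 hxl⟩
    have hodz : od z y = {x} := by
      obtain ⟨w, hw⟩ := (hne z y).1
      have hsub : od z y ⊆ {x} := by
        intro v hv'
        have : v ∈ ⋃ z' ∈ im y x, od z' y := Set.mem_biUnion hzmem hv'
        rw [hdiv y x, hmaxl] at this
        exact this
      exact Set.eq_singleton_iff_nonempty_unique_mem.mpr ⟨⟨w, hw⟩, fun v hv' => hsub hv'⟩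
    obtain ⟨m, hm, hodm⟩ := hv z y (fun a ha => by
      rw [hn, Set.mem_singleton_iff] at ha
      subst ha
      exact lub2_left hza)
    rw [hodz] at hodm
    have hmx : m = x := (Set.singleton_eq_singleton_iff.mp hodm).symm
    subst hmx
    refine ⟨z, ?_, ?_⟩
    · rw [Set.pair_comm]; exact hza
    · rw [Set.pair_comm]; exact hm
  -- the orthomodular law, dual of hdual
  have homl : ∀ x y : R, x ≤ y → ∃ m, IsGLB {y, n x} m ∧ IsLUB {x, m} y := by
    intro x y hxy
    obtain ⟨j, hj1, hj2⟩ := hdual (n y) (n x) (hmono x y hxy)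
    rw [hinv] at hj1
    refine ⟨n j, glb2 ?_ ?_ ?_, lub2 hxy ?_ ?_⟩
    · have := hmono (n y) j (lub2_left hj1)
      rwa [hinv] at this
    · exact hmono x j (lub2_right hj1)
    · intro l hly hlnx
      have h1 : n y ≤ n l := hmono l y hly
      have h2 : x ≤ n l := by
        have := hmono l (n x) hlnx
        rwa [hinv] at this
      have h3 : j ≤ n l := hj1.2 (by rintro v (rfl | rfl) <;> assumption)
      have := hmono j (n l) h3
      rwa [hinv] at this
    · have := hmono (n y) j (lub2_left hj1)
      rwa [hinv] at this
    · intro u hxu hnju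
      have h1 : n u ≤ n x := hmono x u hxu
      have h2 : n u ≤ j := by
        have := hmono (n j) u hnju
        rwa [hinv] at this
      have h3 : n u ≤ n y := hj2.2 (by rintro v (rfl | rfl) <;> assumption)
      have := hmono (n u) (n y) h3
      rwa [hinv, hinv] at this
  exact ⟨n, hn, hmono, hinv, hglb, hlub, hjoin, homl, hdual⟩
end

section
/- Let R = (R, ≤, ⊙, →, 0, 1) be a divisible operator residuated structure of finite height satisfying the double negation law, and define x' := x → 0 (identified with its unique element). Then (R, ≤, ', 0, 1) is a dually weakly orthomodular poset satisfying x'' = x: for x ≤ y, the meet y ∧ (x ∨ y') exists and equals x, and x ∧ x' = 0, x ∨ x' = 1. -/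
theorem stmt19 {R : Type*} [PartialOrder R] [BoundedOrder R]
    (od im : R → R → Set R)
    (hfin : FinHeight R)
    (hne : ∀ x y : R, (od x y).Nonempty ∧ (im x y).Nonempty)
    (hadj : ∀ x y z : R, SubLE (od x y) {z} ↔ SubLE {x} (im y z))
    (hone : ∀ x : R, od x ⊤ = {x} ∧ od ⊤ x = {x})
    (hv : ∀ x y : R, (∀ a ∈ im y ⊥, a ≤ x) → ∃ m, IsGLB {x, y} m ∧ od x y = {m})
    (hvi : ∀ x y : R, y ≤ x → im x y = {w | ∃ a ∈ im x ⊥, IsLUB {a, y} w})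
    (hdiv : ∀ x y : R, (⋃ z ∈ im x y, od z x) = MaxL x y)
    (hdnl : ∀ x : R, (⋃ z ∈ im x ⊥, im z ⊥) = {x}) :
    ∃ n : R → R, (∀ x : R, im x ⊥ = {n x}) ∧
      (∀ x : R, n (n x) = x) ∧
      (∀ x : R, IsGLB {x, n x} ⊥) ∧
      (∀ x : R, IsLUB {x, n x} ⊤) ∧
      (∀ x y : R, x ≤ y → ∃ j, IsLUB {x, n y} j ∧ IsGLB {y, j} x) := by
  -- L1 : if a ∈ im x ⊥ then im a ⊥ = {x}
  have L1 : ∀ x : R, ∀ a ∈ im x ⊥, im a ⊥ = {x} := by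
    intro x a ha
    have hsub : im a ⊥ ⊆ {x} := by
      rw [← hdnl x]
      exact fun w hw => Set.mem_biUnion ha hw
    obtain ⟨b, hb⟩ := (hne a ⊥).2
    have hb' : b = x := hsub hb
    apply Set.Subset.antisymm hsub
    intro w hw
    rw [Set.mem_singleton_iff] at hw
    subst hw; rw [← hb']; exact hb
  -- L2 : im x ⊥ is a singleton
  have L2 : ∀ x : R, ∃ a, im x ⊥ = {a} := by
    intro x
    obtain ⟨a, ha⟩ := (hne x ⊥).2
    refine ⟨a, ?_⟩
    have h1 := L1 x a ha
    have h2 := hdnl a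
    rw [h1] at h2
    simpa using h2
  choose n hn using L2
  have hmemn : ∀ x : R, n x ∈ im x ⊥ := fun x => by rw [hn x]; rfl
  -- involution
  have hinv : ∀ x : R, n (n x) = x := by
    intro x
    have h1 : im (n x) ⊥ = {x} := L1 x (n x) (hmemn x)
    have h2 := hmemn (n x)
    rw [h1] at h2
    exact h2
  -- key: a ≤ n b ↔ ⊥ ∈ od ...; we only need direct computations
  -- GLB : IsGLB {x, n x} ⊥
  have hglb : ∀ x : R, IsGLB {x, n x} ⊥ := by
    intro x
    have hcond : ∀ a ∈ im (n x) ⊥, a ≤ x := by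
      intro a ha
      rw [L1 x (n x) (hmemn x)] at ha
      exact le_of_eq ha
    obtain ⟨m, hm, hod⟩ := hv x (n x)  hcond
    have hsle : SubLE (od x (n x)) {(⊥ : R)} := by
      rw [hadj]
      refine ⟨x, rfl, x, ?_, le_refl x⟩
      rw [L1 x (n x) (hmemn x)]; rfl
    obtain ⟨e, he, b, hb, heb⟩ := hsle
    rw [Set.mem_singleton_iff] at hb
    subst hb
    rw [hod, Set.mem_singleton_iff] at he
    have hmbot : m = ⊥ := le_antisymm (he ▸ heb) bot_le
    rwa [hmbot] at hm
  -- LUB : IsLUB {x, n x} ⊤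
  have hlub : ∀ x : R, IsLUB {x, n x} ⊤ := by
    intro x
    have htop : (⊤ : R) ∈ im x x := by
      have : SubLE (od ⊤ x) {x} := by
        rw [(hone x).2]
        exact ⟨x, rfl, x, rfl, le_refl x⟩
      rw [hadj] at this
      obtain ⟨a, ha, w, hw, haw⟩ := this
      rw [Set.mem_singleton_iff] at ha
      subst ha
      have : w = ⊤ := le_antisymm le_top haw
      rwa [this] at hw
    rw [hvi x x (le_refl x)] at htop
    obtain ⟨a, ha, hlub'⟩ := htop
    rw [hn x, Set.mem_singleton_iff] at ha
    subst ha
    rwa [Set.pair_comm] at hlub'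
  -- fifth property
  refine ⟨n, hn, hinv, hglb, hlub, ?_⟩
  intro x y hxy
  have him : im y x = {w | ∃ a ∈ im y ⊥, IsLUB {a, x} w} := hvi y x hxy
  obtain ⟨j, hj⟩ := (hne y x).2
  rw [him] at hj
  obtain ⟨a, ha, hjlub⟩ := hj
  rw [hn y, Set.mem_singleton_iff] at ha
  subst ha
  -- im y x = {j}
  have himj : im y x = {j} := by
    rw [him]
    ext w
    simp only [Set.mem_setOf_eq, Set.mem_singleton_iff, hn y]
    constructor
    · rintro ⟨a, ha, hw⟩
      subst ha
      exact hw.unique hjlub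
    · rintro rfl
      exact ⟨n y, rfl, hjlub⟩
  -- MaxL y x = {x}
  have hmaxl : MaxL y x = {x} := by
    ext m
    simp only [MaxL, LB, Set.mem_setOf_eq, Set.mem_singleton_iff]
    constructor
    · rintro ⟨⟨hm1, hm2⟩, hmax⟩
      exact (hmax x ⟨hxy, le_refl x⟩ hm2).symm
    · intro hm
      subst hm
      exact ⟨⟨hxy, le_refl m⟩, fun l hl hxl => le_antisymm hl.2 hxl⟩
  -- od j y = {x}
  have hodjy : od j y = {x} := by
    have := hdiv y x
    rw [himj, hmaxl] at this
    simpa using this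
  have hcond : ∀ a ∈ im y ⊥, a ≤ j := by
    intro a ha
    rw [hn y, Set.mem_singleton_iff] at ha
    subst ha
    exact hjlub.1 (Set.mem_insert _ _)
  obtain ⟨m, hm, hod⟩ := hv j y hcond
  rw [hodjy] at hod
  have hmx : m = x := (Set.singleton_eq_singleton_iff.mp hod.symm)
  subst hmx
  refine ⟨j, ?_, ?_⟩
  · rwa [Set.pair_comm] at hjlub
  · rwa [Set.pair_comm] at hm
end
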